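/- arXiv:0806.3449 — 6 statements merged into one kernel-verified Lean document; each statement's English description precedes it below -/
import Mathlib

section
/- Let X and M be real Banach spaces, U₀ ⊂ X a subset and O₀ ⊂ M an open subset. Let J : U₀ × O₀ → ℝ be continuous, with J(w,·) ∈ C¹(O₀) for each w ∈ U₀ and with partial Fréchet derivative ∂_M J continuous on U₀ × O₀ as a map into M'. Let u : O₀ → U₀ be continuous (into X) such that u(μ) is a global minimizer of J(·,μ) in U₀ for each μ ∈ O₀. Then the minimum-value function J_*(μ) := J(u(μ),μ) is continuously Fréchet differentiable on O₀, and J_*'(μ) = ∂_M J(u(μ),μ) for all μ ∈ O₀. -/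
open Set Filter Topology Asymptotics

/-!
Write `J_*(ν) = J(u ν, ν)` and `L = ∂_M J(u μ, μ)`. Minimality of `u ν` and of `u μ` traps the
increment between two increments along fixed parameters:
`J(u ν, ν) - J(u ν, μ) ≤ J_*(ν) - J_*(μ) ≤ J(u μ, ν) - J(u μ, μ)`.
The right side is `L (ν - μ) + o(ν - μ)` because `J(u μ, ·)` is differentiable at `μ`; so is the
left side, by the mean value inequality, because `∂_M J(u ν, ξ) → L` as `(ν, ξ) → (μ, μ)`.
-/

theorem Asymptotics.IsLittleO.of_le_of_le {α F : Type*} [Norm F] {l : Filter α}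
    {f g h : α → ℝ} {k : α → F} (hg : g =o[l] k) (hh : h =o[l] k)
    (hgf : ∀ᶠ a in l, g a ≤ f a) (hfh : ∀ᶠ a in l, f a ≤ h a) : f =o[l] k := by
  have hf : f =O[l] fun a => ‖g a‖ + ‖h a‖ := by
    refine IsBigO.of_bound' ?_
    filter_upwards [hgf, hfh] with a hga hha
    simp only [Real.norm_eq_abs]
    refine (abs_le.2 ⟨?_, ?_⟩).trans (le_abs_self _) <;>
      linarith [neg_abs_le (g a), le_abs_self (h a), abs_nonneg (g a), abs_nonneg (h a)]
  exact hf.trans_isLittleO (hg.norm_left.add hh.norm_left)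

section Envelope

variable {E : Type*} [NormedAddCommGroup E] [NormedSpace ℝ E]

theorem isLittleO_diag_sub_sub_of_tendsto_fderiv {F : Type*} [NormedAddCommGroup F]
    [NormedSpace ℝ F] {φ : E → E → F} {φ' : E → E → E →L[ℝ] F} {x : E}
    (hφ : ∀ᶠ p in 𝓝 x ×ˢ 𝓝 x, HasFDerivAt (φ p.1) (φ' p.1 p.2) p.2)
    (hφ' : Tendsto (Function.uncurry φ') (𝓝 x ×ˢ 𝓝 x) (𝓝 (φ' x x))) :
    (fun y => φ y y - φ y x - φ' x x (y - x)) =o[𝓝 x] fun y => y - x := by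
  refine isLittleO_iff.2 fun c hc => ?_
  obtain ⟨t, ht, hbound⟩ := eventually_prod_self_iff'.1
    (hφ.and (hφ'.eventually (Metric.closedBall_mem_nhds _ hc)))
  obtain ⟨r, hr, hrt⟩ := Metric.mem_nhds_iff.1 ht
  filter_upwards [Metric.ball_mem_nhds x hr] with y hy
  exact (convex_ball x r).norm_image_sub_le_of_norm_hasFDerivWithin_le'
    (fun z hz => (hbound y (hrt hy) z (hrt hz)).1.hasFDerivWithinAt)
    (fun z hz => dist_eq_norm (φ' y z) _ ▸ (hbound y (hrt hy) z (hrt hz)).2)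
    (Metric.mem_ball_self hr) hy

theorem hasFDerivAt_diag_of_le {φ : E → E → ℝ} {φ' : E → E → E →L[ℝ] ℝ} {x : E}
    (hφ : ∀ᶠ p in 𝓝 x ×ˢ 𝓝 x, HasFDerivAt (φ p.1) (φ' p.1 p.2) p.2)
    (hφ' : Tendsto (Function.uncurry φ') (𝓝 x ×ˢ 𝓝 x) (𝓝 (φ' x x)))
    (hle : ∀ᶠ y in 𝓝 x, φ y y ≤ φ x y ∧ φ x x ≤ φ y x) :
    HasFDerivAt (fun y => φ y y) (φ' x x) x := by
  have hlower := isLittleO_diag_sub_sub_of_tendsto_fderiv hφ hφ'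
  have hx : HasFDerivAt (φ x) (φ' x x) x := by
    rw [← nhds_prod_eq] at hφ
    exact hφ.self_of_nhds
  refine hasFDerivAt_iff_isLittleO.2 (hlower.of_le_of_le hx.isLittleO ?_ ?_) <;>
    filter_upwards [hle] with y ⟨hle₁, hle₂⟩ <;> linarith

end Envelope

theorem envelope_theorem_general
    {X M : Type*} [NormedAddCommGroup X] [NormedSpace ℝ X]
    [NormedAddCommGroup M] [NormedSpace ℝ M]
    (U₀ : Set X) (O₀ : Set M) (hO₀ : IsOpen O₀)
    (J : X → M → ℝ) (DMJ : X → M → (M →L[ℝ] ℝ))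
    (hJd : ∀ w ∈ U₀, ∀ μ ∈ O₀, HasFDerivAt (fun ν => J w ν) (DMJ w μ) μ)
    (hDc : ContinuousOn (fun p : X × M => DMJ p.1 p.2) (U₀ ×ˢ O₀))
    (u : M → X) (hu : ContinuousOn u O₀) (huU : MapsTo u O₀ U₀)
    (hmin : ∀ μ ∈ O₀, ∀ w ∈ U₀, J (u μ) μ ≤ J w μ) :
    (∀ μ ∈ O₀, HasFDerivAt (fun ν => J (u ν) ν) (DMJ (u μ) μ) μ) ∧
      ContinuousOn (fun μ => DMJ (u μ) μ) O₀ := by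
  refine ⟨fun μ hμ => ?_, hDc.comp (hu.prodMk continuousOn_id) fun ν hν => ⟨huU hν, hν⟩⟩
  have hO₀μ : O₀ ∈ 𝓝 μ := hO₀.mem_nhds hμ
  have hparam : Tendsto (fun p : M × M => (u p.1, p.2)) (𝓝 μ ×ˢ 𝓝 μ) (𝓝[U₀ ×ˢ O₀] (u μ, μ)) :=
    tendsto_nhdsWithin_iff.2
      ⟨((hu.continuousAt hO₀μ).tendsto.comp tendsto_fst).prodMk_nhds tendsto_snd,
        by filter_upwards [prod_mem_prod hO₀μ hO₀μ] with p hp using ⟨huU hp.1, hp.2⟩⟩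
  refine hasFDerivAt_diag_of_le (φ := fun ν => J (u ν)) (φ' := fun ν => DMJ (u ν)) ?_
    ((hDc _ ⟨huU hμ, hμ⟩).tendsto.comp hparam) ?_
  · filter_upwards [prod_mem_prod hO₀μ hO₀μ] with p hp using hJd _ (huU hp.1) _ hp.2
  · filter_upwards [hO₀μ] with ν hν using ⟨hmin ν hν _ (huU hμ), hmin μ hμ _ (huU hν)⟩

/-- **Envelope theorem** (Theorem 2.1 of Kimura–Wakano).
`X` and `M` are real Banach spaces, `U₀ ⊆ X`, `O₀ ⊆ M` open.
`J : U₀ × O₀ → ℝ` is continuous, `J(w,·)` is differentiable on `O₀` with partial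
Fréchet derivative `DMJ w μ ∈ M'`, and `∂_M J = DMJ` is continuous on `U₀ × O₀`.
`u : O₀ → U₀` is continuous and `u μ` is a global minimizer of `J(·,μ)` in `U₀`.
Then `J_*(μ) := J (u μ) μ` is continuously Fréchet differentiable on `O₀` with
`J_*'(μ) = ∂_M J (u μ) μ`. -/
theorem envelope_theorem
    {X M : Type*} [NormedAddCommGroup X] [NormedSpace ℝ X] [CompleteSpace X]
    [NormedAddCommGroup M] [NormedSpace ℝ M] [CompleteSpace M]
    (U₀ : Set X) (O₀ : Set M) (hO₀ : IsOpen O₀)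
    (J : X → M → ℝ) (DMJ : X → M → (M →L[ℝ] ℝ))
    (hJc : ContinuousOn (fun p : X × M => J p.1 p.2) (U₀ ×ˢ O₀))
    (hJd : ∀ w ∈ U₀, ∀ μ ∈ O₀, HasFDerivAt (fun ν => J w ν) (DMJ w μ) μ)
    (hDc : ContinuousOn (fun p : X × M => DMJ p.1 p.2) (U₀ ×ˢ O₀))
    (u : M → X) (hu : ContinuousOn u O₀) (huU : MapsTo u O₀ U₀)
    (hmin : ∀ μ ∈ O₀, ∀ w ∈ U₀, J (u μ) μ ≤ J w μ) :
    (∀ μ ∈ O₀, HasFDerivAt (fun ν => J (u ν) ν) (DMJ (u μ) μ) μ) ∧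
      ContinuousOn (fun μ => DMJ (u μ) μ) O₀ :=
  envelope_theorem_general U₀ O₀ hO₀ J DMJ hJd hDc u hu huU hmin
end

section
/- Under the hypotheses of the envelope theorem (J continuous, J(w,·) ∈ C¹, ∂_M J continuous, u(μ) a global minimizer depending continuously on μ), if moreover U₀ is open, ∂_M J ∈ C^k(U₀ × O₀, M') and u ∈ C^k(O₀, X), then J_* ∈ C^{k+1}(O₀). -/
/-!
By minimality, `J_*(ν) - J_*(μ)` lies between the increments `J(u ν, ν) - J(u ν, μ)` and
`J(u μ, ν) - J(u μ, μ)` of `J` in its second variable. Continuity of `∂_M J` in both variables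
and the mean value inequality make both increments `∂_M J(u μ, μ)(ν - μ) + o(ν - μ)`, so
`J_*' = ∂_M J(u ·, ·)`, which is `C^k` as a composition of `C^k` maps.
-/

open Set Filter Topology

theorem Asymptotics.IsLittleO.of_le_of_le_s1 {α E : Type*} [Norm E] {l : Filter α}
    {f A B : α → ℝ} {g : α → E} (hA : A =o[l] g) (hB : B =o[l] g)
    (hAf : ∀ᶠ x in l, A x ≤ f x) (hfB : ∀ᶠ x in l, f x ≤ B x) : f =o[l] g := by
  have hf : f =O[l] fun x => ‖A x‖ + ‖B x‖ := by
    refine IsBigO.of_bound 1 ?_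
    filter_upwards [hAf, hfB] with x hAx hxB
    simp only [Real.norm_eq_abs, one_mul]
    rw [abs_le]
    constructor <;> linarith [neg_abs_le (A x), le_abs_self (B x), abs_nonneg (A x),
      abs_nonneg (B x), abs_of_nonneg (add_nonneg (abs_nonneg (A x)) (abs_nonneg (B x)))]
  exact hf.trans_isLittleO (hA.norm_left.add hB.norm_left)

theorem isLittleO_sub_fderiv_of_continuousWithinAt
    {X M F : Type*} [TopologicalSpace X] [NormedAddCommGroup M] [NormedSpace ℝ M]
    [NormedAddCommGroup F] [NormedSpace ℝ F]
    {s : Set X} {O : Set M} (hO : IsOpen O) {J : X → M → F} {D : X → M → (M →L[ℝ] F)}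
    (hJ : ∀ w ∈ s, ∀ μ ∈ O, HasFDerivAt (J w) (D w μ) μ)
    {w₀ : X} {μ₀ : M} (hμ₀ : μ₀ ∈ O)
    (hD : ContinuousWithinAt (fun p : X × M => D p.1 p.2) (s ×ˢ O) (w₀, μ₀)) :
    (fun p : X × M => J p.1 p.2 - J p.1 μ₀ - D w₀ μ₀ (p.2 - μ₀)) =o[𝓝[s] w₀ ×ˢ 𝓝 μ₀]
      fun p => p.2 - μ₀ := by
  refine Asymptotics.isLittleO_iff.2 fun ε hε => ?_
  have hnear : ∀ᶠ p in 𝓝[s] w₀ ×ˢ 𝓝 μ₀,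
      p.1 ∈ s ∧ p.2 ∈ O ∧ ‖D p.1 p.2 - D w₀ μ₀‖ ≤ ε := by
    rw [← hO.nhdsWithin_eq hμ₀, ← nhdsWithin_prod_eq]
    filter_upwards [self_mem_nhdsWithin, hD (Metric.closedBall_mem_nhds _ hε)]
      with p hp hpD
    exact ⟨hp.1, hp.2, mem_closedBall_iff_norm.1 hpD⟩
  obtain ⟨pa, hpa, pb, hpb, hab⟩ := eventually_prod_iff.1 hnear
  obtain ⟨δ, hδ, hball⟩ := Metric.eventually_nhds_iff_ball.1 hpb
  filter_upwards [prod_mem_prod hpa (Metric.ball_mem_nhds μ₀ hδ)]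
  rintro ⟨w, ν⟩ ⟨hw, hν⟩
  exact Convex.norm_image_sub_le_of_norm_hasFDerivWithin_le'
    (fun σ hσ => (hJ w (hab hw (hball σ hσ)).1 σ (hab hw (hball σ hσ)).2.1).hasFDerivWithinAt)
    (fun σ hσ => (hab hw (hball σ hσ)).2.2) (convex_ball μ₀ δ) (Metric.mem_ball_self hδ) hν

theorem hasFDerivAt_envelope
    {X M : Type*} [TopologicalSpace X] [NormedAddCommGroup M] [NormedSpace ℝ M]
    {U : Set X} {O : Set M} (hO : IsOpen O) {J : X → M → ℝ} {D : X → M → (M →L[ℝ] ℝ)}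
    (hJ : ∀ w ∈ U, ∀ μ ∈ O, HasFDerivAt (J w) (D w μ) μ)
    (hD : ContinuousOn (fun p : X × M => D p.1 p.2) (U ×ˢ O))
    {u : M → X} (hu : ContinuousOn u O) (huU : MapsTo u O U)
    (hmin : ∀ μ ∈ O, ∀ w ∈ U, J (u μ) μ ≤ J w μ) {μ₀ : M} (hμ₀ : μ₀ ∈ O) :
    HasFDerivAt (fun μ => J (u μ) μ) (D (u μ₀) μ₀) μ₀ := by
  have hw₀ : u μ₀ ∈ U := huU hμ₀
  have hO_nhds : O ∈ 𝓝 μ₀ := hO.mem_nhds hμ₀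
  have hexp := isLittleO_sub_fderiv_of_continuousWithinAt hO hJ hμ₀ (hD _ ⟨hw₀, hμ₀⟩)
  have hu_tendsto : Tendsto u (𝓝 μ₀) (𝓝[U] u μ₀) :=
    tendsto_nhdsWithin_iff.2 ⟨hu.continuousAt hO_nhds, eventually_of_mem hO_nhds huU⟩
  have hlower := hexp.comp_tendsto (hu_tendsto.prodMk tendsto_id)
  have hupper := hexp.comp_tendsto
    ((tendsto_const_nhdsWithin hw₀ : Tendsto (fun _ => u μ₀) (𝓝 μ₀) _).prodMk tendsto_id)
  rw [hasFDerivAt_iff_isLittleO]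
  refine hlower.of_le_of_le_s1 hupper ?_ ?_ <;> filter_upwards [hO_nhds] with ν hν
  · simp only [Function.comp_apply, id_eq]
    linarith [hmin μ₀ hμ₀ (u ν) (huU hν)]
  · simp only [Function.comp_apply, id_eq]
    linarith [hmin ν hν (u μ₀) hw₀]

theorem envelope_ck_corollary_general
    {X M : Type*} [NormedAddCommGroup X] [NormedSpace ℝ X]
    [NormedAddCommGroup M] [NormedSpace ℝ M]
    (U₀ : Set X) (O₀ : Set M) (hO₀ : IsOpen O₀)
    (J : X → M → ℝ) (DMJ : X → M → (M →L[ℝ] ℝ))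
    (hJd : ∀ w ∈ U₀, ∀ μ ∈ O₀, HasFDerivAt (fun ν => J w ν) (DMJ w μ) μ)
    (u : M → X) (huU : MapsTo u O₀ U₀)
    (hmin : ∀ μ ∈ O₀, ∀ w ∈ U₀, J (u μ) μ ≤ J w μ)
    (k : ℕ)
    (hDk : ContDiffOn ℝ k (fun p : X × M => DMJ p.1 p.2) (U₀ ×ˢ O₀))
    (huk : ContDiffOn ℝ k u O₀) :
    ContDiffOn ℝ (k + 1) (fun μ => J (u μ) μ) O₀ := by
  have hderiv : ∀ μ ∈ O₀, HasFDerivAt (fun μ => J (u μ) μ) (DMJ (u μ) μ) μ := fun μ hμ =>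
    hasFDerivAt_envelope hO₀ hJd hDk.continuousOn huk.continuousOn huU hmin hμ
  have hDu : ContDiffOn ℝ k (fun μ => DMJ (u μ) μ) O₀ :=
    hDk.comp (huk.prodMk contDiffOn_id) fun μ hμ => ⟨huU hμ, hμ⟩
  rw [contDiffOn_succ_iff_fderiv_of_isOpen hO₀]
  exact ⟨fun μ hμ => (hderiv μ hμ).differentiableAt.differentiableWithinAt, by simp,
    hDu.congr fun μ hμ => (hderiv μ hμ).fderiv⟩

/-- **Corollary to the envelope theorem** (Corollary 2.2 of Kimura–Wakano).
Under the hypotheses of the envelope theorem (`J` continuous, `J(w,·) ∈ C¹`,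
`∂_M J` continuous, `u μ` a global minimizer depending continuously on `μ`),
if moreover `U₀` is open, `∂_M J ∈ C^k(U₀ × O₀, M')` and `u ∈ C^k(O₀, X)`,
then `J_* ∈ C^{k+1}(O₀)`. -/
theorem envelope_ck_corollary
    {X M : Type*} [NormedAddCommGroup X] [NormedSpace ℝ X] [CompleteSpace X]
    [NormedAddCommGroup M] [NormedSpace ℝ M] [CompleteSpace M]
    (U₀ : Set X) (O₀ : Set M) (hU₀ : IsOpen U₀) (hO₀ : IsOpen O₀)
    (J : X → M → ℝ) (DMJ : X → M → (M →L[ℝ] ℝ))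
    (hJc : ContinuousOn (fun p : X × M => J p.1 p.2) (U₀ ×ˢ O₀))
    (hJd : ∀ w ∈ U₀, ∀ μ ∈ O₀, HasFDerivAt (fun ν => J w ν) (DMJ w μ) μ)
    (hDc : ContinuousOn (fun p : X × M => DMJ p.1 p.2) (U₀ ×ˢ O₀))
    (u : M → X) (hu : ContinuousOn u O₀) (huU : MapsTo u O₀ U₀)
    (hmin : ∀ μ ∈ O₀, ∀ w ∈ U₀, J (u μ) μ ≤ J w μ)
    (k : ℕ)
    (hDk : ContDiffOn ℝ k (fun p : X × M => DMJ p.1 p.2) (U₀ ×ˢ O₀))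
    (huk : ContDiffOn ℝ k u O₀) :
    ContDiffOn ℝ (k + 1) (fun μ => J (u μ) μ) O₀ :=
  envelope_ck_corollary_general U₀ O₀ hO₀ J DMJ hJd u huU hmin k hDk huk
end

section
/- Under the hypotheses of the local-minimizer existence theorem, if additionally J ∈ C¹(U × O), then the minimizer map u satisfies ‖u(μ) − u₀‖_X = o(‖μ − μ₀‖_M^{1/2}) as μ → μ₀. -/
open Set Filter Topology Asymptotics

/-!
Since `u μ` is a critical point of `J(·,μ)` and `∂_X² J` stays `α/2`-coercive near `(u₀,μ₀)`,
`J(u₀,μ) - J(u μ,μ) ≥ (α/4)‖u μ - u₀‖²`. Since `u₀` minimizes `J(·,μ₀)`,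
`J(u₀,μ₀) - J(u μ,μ₀) ≤ 0`. Subtracting, `(α/4)‖u μ - u₀‖²` is bounded by the mixed difference
`(J(u₀,μ) - J(u₀,μ₀)) - (J(u μ,μ) - J(u μ,μ₀))`, which is `o(‖μ - μ₀‖)` because `J` is strictly
differentiable at `(u₀,μ₀)` and `u μ → u₀`.
-/

theorem add_half_mul_sq_le_of_le_second_deriv {g g' g'' : ℝ → ℝ} {a b C : ℝ} (hab : a ≤ b)
    (hg : ∀ t ∈ Icc a b, HasDerivAt g (g' t) t) (hg' : ∀ t ∈ Icc a b, HasDerivAt g' (g'' t) t)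
    (hC : ∀ t ∈ Icc a b, C ≤ g'' t) (ha : g' a = 0) :
    g a + C / 2 * (b - a) ^ 2 ≤ g b := by
  have hg'_ge : ∀ t ∈ Icc a b, C * (t - a) ≤ g' t := by
    intro t ht
    have := (convex_Icc a b).mul_sub_le_image_sub_of_le_deriv
      (fun s hs => (hg' s hs).continuousAt.continuousWithinAt)
      (fun s hs => (hg' s (interior_subset hs)).differentiableAt.differentiableWithinAt)
      (fun s hs => (hg' s (interior_subset hs)).deriv ▸ hC s (interior_subset hs))
      a (left_mem_Icc.2 hab) t ht ht.1
    rwa [ha, sub_zero] at this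
  have hφ : ∀ t ∈ Icc a b,
      HasDerivAt (fun s => g s - C / 2 * (s - a) ^ 2) (g' t - C * (t - a)) t := by
    intro t ht
    refine ((hg t ht).sub (((hasDerivAt_id t).sub_const a).pow 2 |>.const_mul (C / 2)))
      |>.congr_deriv ?_
    simp only [id, Nat.cast_ofNat]
    ring
  have hmono : MonotoneOn (fun s => g s - C / 2 * (s - a) ^ 2) (Icc a b) :=
    monotoneOn_of_hasDerivWithinAt_nonneg (convex_Icc a b)
      (fun s hs => (hφ s hs).continuousAt.continuousWithinAt)
      (fun s hs => (hφ s (interior_subset hs)).hasDerivWithinAt)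
      (fun s hs => sub_nonneg.2 (hg'_ge s (interior_subset hs)))
  have : g a - C / 2 * (a - a) ^ 2 ≤ g b - C / 2 * (b - a) ^ 2 :=
    hmono (left_mem_Icc.2 hab) (right_mem_Icc.2 hab) hab
  rw [sub_self, zero_pow two_ne_zero, mul_zero, sub_zero] at this
  linarith

theorem Convex.add_half_mul_norm_sq_le_of_coercive {E : Type*} [NormedAddCommGroup E]
    [NormedSpace ℝ E] {f : E → ℝ} {f' : E → (E →L[ℝ] ℝ)} {f'' : E → E →L[ℝ] (E →L[ℝ] ℝ)}
    {s : Set E} {κ : ℝ} {x y : E} (hs : Convex ℝ s)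
    (hf : ∀ z ∈ s, HasFDerivAt f (f' z) z) (hf' : ∀ z ∈ s, HasFDerivAt f' (f'' z) z)
    (hκ : ∀ z ∈ s, ∀ v, κ * ‖v‖ ^ 2 ≤ f'' z v v) (hx : x ∈ s) (hy : y ∈ s) (hcrit : f' x = 0) :
    f x + κ / 2 * ‖y - x‖ ^ 2 ≤ f y := by
  set h := y - x
  have hseg : ∀ t ∈ Icc (0 : ℝ) 1, x + t • h ∈ s := fun t ht => hs.add_smul_sub_mem hx hy ht
  have hline : ∀ t : ℝ, HasDerivAt (fun r : ℝ => x + r • h) h t := by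
    intro t
    simpa using ((hasDerivAt_id t).smul_const h).const_add x
  have := add_half_mul_sq_le_of_le_second_deriv zero_le_one (g := fun t => f (x + t • h))
    (g' := fun t => f' (x + t • h) h) (g'' := fun t => f'' (x + t • h) h h) (C := κ * ‖h‖ ^ 2)
    (fun t ht => (hf _ (hseg t ht)).comp_hasDerivAt t (hline t))
    (fun t ht => by
      have hf't : HasDerivAt (fun r => f' (x + r • h)) (f'' (x + t • h) h) t :=
        (hf' _ (hseg t ht)).comp_hasDerivAt t (hline t)
      simpa using hf't.clm_apply (hasDerivAt_const t h))
    (fun t ht => hκ _ (hseg t ht) h) (by simp [hcrit])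
  simp only [zero_smul, add_zero, one_smul, h, add_sub_cancel, sub_zero, one_pow, mul_one] at this
  linarith

theorem ContinuousLinearMap.sub_mul_norm_sq_le_apply_apply {E : Type*} [NormedAddCommGroup E]
    [NormedSpace ℝ E] {B B₀ : E →L[ℝ] (E →L[ℝ] ℝ)} {α β : ℝ}
    (hB₀ : ∀ v, α * ‖v‖ ^ 2 ≤ B₀ v v) (hB : ‖B - B₀‖ ≤ β) (v : E) :
    (α - β) * ‖v‖ ^ 2 ≤ B v v := by
  have hdiff : |(B - B₀) v v| ≤ β * ‖v‖ ^ 2 :=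
    calc |(B - B₀) v v| ≤ ‖B - B₀‖ * ‖v‖ * ‖v‖ := (B - B₀).le_opNorm₂ v v
      _ ≤ β * ‖v‖ * ‖v‖ := by gcongr
      _ = β * ‖v‖ ^ 2 := by ring
  have := (abs_le.1 hdiff).1
  simp only [FunLike.coe_sub, Pi.sub_apply] at this
  linarith [hB₀ v]

theorem ContinuousAt.eventually_coercive {T E : Type*} [TopologicalSpace T]
    [NormedAddCommGroup E] [NormedSpace ℝ E] {B : T → E →L[ℝ] (E →L[ℝ] ℝ)} {p₀ : T} {α β : ℝ}
    (hB : ContinuousAt B p₀) (hα : ∀ v, α * ‖v‖ ^ 2 ≤ B p₀ v v) (hβ : β < α) :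
    ∀ᶠ p in 𝓝 p₀, ∀ v, β * ‖v‖ ^ 2 ≤ B p v v := by
  filter_upwards [hB.eventually_mem (Metric.closedBall_mem_nhds (B p₀) (sub_pos.2 hβ))] with p hp
  intro v
  have := ContinuousLinearMap.sub_mul_norm_sq_le_apply_apply hα
    ((dist_eq_norm (B p) (B p₀)).symm.trans_le hp) v
  rwa [sub_sub_cancel] at this

theorem HasStrictFDerivAt.isLittleO_mixed_sub {𝕜 E F G : Type*} [NontriviallyNormedField 𝕜]
    [NormedAddCommGroup E] [NormedSpace 𝕜 E] [NormedAddCommGroup F] [NormedSpace 𝕜 F]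
    [NormedAddCommGroup G] [NormedSpace 𝕜 G] {f : E × F → G} {f' : E × F →L[𝕜] G} {x₀ : E} {y₀ : F}
    (hf : HasStrictFDerivAt f f' (x₀, y₀)) {x : F → E} (hx : Tendsto x (𝓝 y₀) (𝓝 x₀)) :
    (fun y => (f (x₀, y) - f (x₀, y₀)) - (f (x y, y) - f (x y, y₀))) =o[𝓝 y₀]
      fun y => y - y₀ := by
  have along : ∀ a : F → E, Tendsto a (𝓝 y₀) (𝓝 x₀) →
      (fun y => f (a y, y) - f (a y, y₀) - f' ((a y, y) - (a y, y₀))) =o[𝓝 y₀]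
        fun y => y - y₀ := by
    intro a ha
    have ht : Tendsto (fun y => ((a y, y), (a y, y₀))) (𝓝 y₀) (𝓝 ((x₀, y₀), (x₀, y₀))) :=
      (ha.prodMk_nhds tendsto_id).prodMk_nhds (ha.prodMk_nhds tendsto_const_nhds)
    have hinr : (fun y => (a y, y) - (a y, y₀)) =O[𝓝 y₀] fun y => y - y₀ :=
      isBigO_of_le _ fun y => by simp
    exact (hf.isLittleO.comp_tendsto ht).trans_isBigO hinr
  exact ((along _ tendsto_const_nhds).sub (along x hx)).congr_left fun y => by
    simp only [Prod.mk_sub_mk, sub_self]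
    abel

theorem isLittleO_sqrt_norm_of_sq_le {α E F : Type*} [SeminormedAddCommGroup E]
    [SeminormedAddCommGroup F] {l : Filter α} {f : α → E} {g : α → ℝ} {k : α → F}
    (hfg : ∀ᶠ a in l, ‖f a‖ ^ 2 ≤ g a) (hg : g =o[l] k) : f =o[l] fun a => √‖k a‖ := by
  refine isLittleO_iff.2 fun c hc => ?_
  filter_upwards [hfg, hg.def (pow_pos hc 2)] with a hfa hga
  rw [Real.norm_of_nonneg (Real.sqrt_nonneg _), ← Real.sqrt_sq hc.le, ← Real.sqrt_mul (sq_nonneg c)]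
  exact Real.le_sqrt_of_sq_le (hfa.trans ((Real.le_norm_self _).trans hga))

theorem minimizer_holder_estimate_general
    {X M : Type*} [NormedAddCommGroup X] [NormedSpace ℝ X]
    [NormedAddCommGroup M] [NormedSpace ℝ M]
    (U : Set X) (O : Set M)
    (J : X → M → ℝ) (DXJ : X → M → (X →L[ℝ] ℝ))
    (DXXJ : X → M → (X →L[ℝ] X →L[ℝ] ℝ))
    (u₀ : X) (μ₀ : M)
    (hJd1 : ∀ μ ∈ O, ∀ w ∈ U, HasFDerivAt (fun v => J v μ) (DXJ w μ) w)
    (hJd2 : ∀ μ ∈ O, ∀ w ∈ U, HasFDerivAt (fun v => DXJ v μ) (DXXJ w μ) w)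
    (hDXXc : ContinuousAt (fun p : X × M => DXXJ p.1 p.2) (u₀, μ₀))
    (α : ℝ) (hα : 0 < α)
    (hcoer : ∀ w : X, α * ‖w‖ ^ 2 ≤ DXXJ u₀ μ₀ w w)
    -- additional hypothesis: `J ∈ C¹(U × O)`
    (hJC1 : ContDiffOn ℝ 1 (fun p : X × M => J p.1 p.2) (U ×ˢ O))
    -- the minimizer map provided by the local-minimizer existence theorem
    (U₀ : Set X) (O₀ : Set M) (u : M → X)
    (hU₀ : IsOpen U₀) (hO₀ : IsOpen O₀) (hu₀U₀ : u₀ ∈ U₀) (hμ₀O₀ : μ₀ ∈ O₀)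
    (hU₀U : U₀ ⊆ U) (hO₀O : O₀ ⊆ O)
    (hu : ContinuousOn u O₀) (huU₀ : MapsTo u O₀ U₀)
    (hu₀ : u μ₀ = u₀)
    (hucrit : ∀ μ ∈ O₀, DXJ (u μ) μ = 0)
    (humin : ∀ μ ∈ O₀, ∀ w ∈ U₀, J (u μ) μ ≤ J w μ) :
    (fun μ => u μ - u₀) =o[𝓝 μ₀] fun μ => Real.sqrt ‖μ - μ₀‖ := by
  have hnhds : U₀ ×ˢ O₀ ∈ 𝓝 (u₀, μ₀) := prod_mem_nhds (hU₀.mem_nhds hu₀U₀) (hO₀.mem_nhds hμ₀O₀)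
  have hstrict := ((hJC1.mono (prod_mono hU₀U hO₀O)).contDiffAt hnhds).hasStrictFDerivAt
    one_ne_zero
  have hu_tendsto : Tendsto u (𝓝 μ₀) (𝓝 u₀) := hu₀ ▸ hu.continuousAt (hO₀.mem_nhds hμ₀O₀)
  obtain ⟨r, hr, hnear⟩ := Metric.eventually_nhds_iff.1
    ((hDXXc.eventually_coercive hcoer (half_lt_self hα)).and hnhds)
  have hgrowth : ∀ᶠ μ in 𝓝 μ₀, ‖u μ - u₀‖ ^ 2 ≤
      4 / α * ((J u₀ μ - J u₀ μ₀) - (J (u μ) μ - J (u μ) μ₀)) := by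
    filter_upwards [hu_tendsto (Metric.ball_mem_nhds u₀ hr), Metric.ball_mem_nhds μ₀ hr]
      with μ huμ hμ
    have hnearμ : ∀ z ∈ Metric.ball u₀ r,
        (∀ v, α / 2 * ‖v‖ ^ 2 ≤ DXXJ z μ v v) ∧ z ∈ U₀ ∧ μ ∈ O₀ := fun z hz =>
      hnear (y := (z, μ)) (by rw [Prod.dist_eq]; exact max_lt hz hμ)
    have hμO₀ : μ ∈ O₀ := (hnearμ u₀ (Metric.mem_ball_self hr)).2.2
    have hquad := (convex_ball u₀ r).add_half_mul_norm_sq_le_of_coercive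
      (fun z hz => hJd1 μ (hO₀O hμO₀) z (hU₀U (hnearμ z hz).2.1))
      (fun z hz => hJd2 μ (hO₀O hμO₀) z (hU₀U (hnearμ z hz).2.1))
      (fun z hz => (hnearμ z hz).1) huμ (Metric.mem_ball_self hr) (hucrit μ hμO₀)
    have hmin := hu₀ ▸ humin μ₀ hμ₀O₀ (u μ) (huU₀ hμO₀)
    rw [div_mul_eq_mul_div, le_div_iff₀ hα, norm_sub_rev]
    linarith
  exact isLittleO_sqrt_norm_of_sq_le hgrowth
    ((hstrict.isLittleO_mixed_sub hu_tendsto).const_mul_left _)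

/-- **Hölder-type estimate for the minimizer map** (Proposition 2.7 of
Kimura–Wakano).  Under the hypotheses of the local-minimizer existence theorem
(`J(·,μ) ∈ C²(U)`, `∂_X J` continuous, `∂_X² J` continuous at `(u₀,μ₀)`,
coercivity `∂_X² J(u₀,μ₀)[w,w] ≥ α‖w‖²`, `∂_X J(u₀,μ₀) = 0`), if additionally
`J ∈ C¹(U × O)`, then the continuous minimizer map `u : O₀ → U₀` (with
`∂_X J(u μ, μ) = 0`, `u μ₀ = u₀`, `u μ` the global minimizer of `J(·,μ)` in
`U₀`) satisfies `‖u μ − u₀‖_X = o(‖μ − μ₀‖_M^{1/2})` as `μ → μ₀`. -/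
theorem minimizer_holder_estimate
    {X M : Type*} [NormedAddCommGroup X] [NormedSpace ℝ X] [CompleteSpace X]
    [NormedAddCommGroup M] [NormedSpace ℝ M] [CompleteSpace M]
    (U : Set X) (O : Set M) (hU : IsOpen U) (hO : IsOpen O)
    (J : X → M → ℝ) (DXJ : X → M → (X →L[ℝ] ℝ))
    (DXXJ : X → M → (X →L[ℝ] X →L[ℝ] ℝ))
    (u₀ : X) (μ₀ : M) (hu₀U : u₀ ∈ U) (hμ₀O : μ₀ ∈ O)
    (hJd1 : ∀ μ ∈ O, ∀ w ∈ U, HasFDerivAt (fun v => J v μ) (DXJ w μ) w)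
    (hJd2 : ∀ μ ∈ O, ∀ w ∈ U, HasFDerivAt (fun v => DXJ v μ) (DXXJ w μ) w)
    (hJ2c : ∀ μ ∈ O, ContinuousOn (fun v => DXXJ v μ) U)
    (hDXc : ContinuousOn (fun p : X × M => DXJ p.1 p.2) (U ×ˢ O))
    (hcrit : DXJ u₀ μ₀ = 0)
    (hDXXc : ContinuousAt (fun p : X × M => DXXJ p.1 p.2) (u₀, μ₀))
    (α : ℝ) (hα : 0 < α)
    (hcoer : ∀ w : X, α * ‖w‖ ^ 2 ≤ DXXJ u₀ μ₀ w w)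
    -- additional hypothesis: `J ∈ C¹(U × O)`
    (hJC1 : ContDiffOn ℝ 1 (fun p : X × M => J p.1 p.2) (U ×ˢ O))
    -- the minimizer map provided by the local-minimizer existence theorem
    (U₀ : Set X) (O₀ : Set M) (u : M → X)
    (hU₀ : IsOpen U₀) (hO₀ : IsOpen O₀) (hu₀U₀ : u₀ ∈ U₀) (hμ₀O₀ : μ₀ ∈ O₀)
    (hU₀U : U₀ ⊆ U) (hO₀O : O₀ ⊆ O)
    (hu : ContinuousOn u O₀) (huU₀ : MapsTo u O₀ U₀)
    (hu₀ : u μ₀ = u₀)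
    (hucrit : ∀ μ ∈ O₀, DXJ (u μ) μ = 0)
    (humin : ∀ μ ∈ O₀, ∀ w ∈ U₀, J (u μ) μ ≤ J w μ) :
    (fun μ => u μ - u₀) =o[𝓝 μ₀] fun μ => Real.sqrt ‖μ - μ₀‖ :=
  minimizer_holder_estimate_general U O J DXJ DXXJ u₀ μ₀ hJd1 hJd2 hDXXc α hα hcoer hJC1 U₀ O₀ u hU₀
    hO₀ hu₀U₀ hμ₀O₀ hU₀U hO₀O hu huU₀ hu₀ hucrit humin
end

section
/- Under the hypotheses of the local-minimizer existence theorem with ∂_X J ∈ C¹(U × O, X'), the Fréchet derivative of the minimizer map is u'(μ) = −Λ(μ) h₀(μ), where h₀(μ) := ∂_M ∂_X J(u(μ),μ) ∈ B(M,X') and Λ(μ) ∈ B(X',X) is the inverse of ∂_X² J(u(μ),μ) regarded as an isomorphism X → X' (i.e. ∂_X² J(u(μ),μ)[Λ(μ)h, w] = h[w] for all w ∈ X, h ∈ X'). -/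
open Set Filter Topology

/-!
The identity `∂_X J (u μ, μ) = 0` is differentiated by the implicit function theorem. Since
`∂_X J` is `C¹` it is strictly differentiable at `(u μ, μ)`, with partial derivatives
`∂_X² J (u μ, μ)` and `h₀ μ`. The Hessian is symmetric, so its right inverse `Λ μ` is also a left
inverse (test against functionals), and the Hessian is an isomorphism. The uniqueness part of the
implicit function theorem identifies the continuous map `u` near `μ` with the implicit function,
whose derivative is `-Λ μ ∘ h₀ μ`.
-/

theorem ContinuousLinearMap.comp_eq_id_of_comp_eq_id_of_symm
    {𝕜 X : Type*} [NontriviallyNormedField 𝕜] [NormedAddCommGroup X] [NormedSpace 𝕜 X]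
    [SeparatingDual 𝕜 X] {A : X →L[𝕜] X →L[𝕜] 𝕜} {Λ : (X →L[𝕜] 𝕜) →L[𝕜] X}
    (hsymm : ∀ v w, A v w = A w v) (hΛ : A ∘L Λ = .id 𝕜 _) :
    Λ ∘L A = .id 𝕜 X := by
  have hAΛ (h : X →L[𝕜] 𝕜) : A (Λ h) = h := congr($hΛ h)
  ext x
  refine (SeparatingDual.eq_iff_forall_dual_eq (R := 𝕜)).2 fun f => ?_
  calc f (Λ (A x)) = A (Λ f) (Λ (A x)) := by rw [hAΛ]
    _ = A (Λ (A x)) (Λ f) := hsymm _ _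
    _ = A (Λ f) x := by rw [hAΛ, hsymm]
    _ = f x := by rw [hAΛ]

theorem HasStrictFDerivAt.hasStrictFDerivAt_of_eventually_apply_eq
    {𝕜 E₁ E₂ F : Type*} [NontriviallyNormedField 𝕜]
    [NormedAddCommGroup E₁] [NormedSpace 𝕜 E₁] [CompleteSpace E₁]
    [NormedAddCommGroup E₂] [NormedSpace 𝕜 E₂] [CompleteSpace E₂]
    [NormedAddCommGroup F] [NormedSpace 𝕜 F] [CompleteSpace F]
    {f : E₁ × E₂ → F} {f' : E₁ × E₂ →L[𝕜] F} {p : E₁ × E₂} (hf : HasStrictFDerivAt f f' p)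
    (hf₂ : (f' ∘L .inr 𝕜 E₁ E₂).IsInvertible) {ψ : E₁ → E₂} (hψ : ContinuousAt ψ p.1)
    (hψp : ψ p.1 = p.2) (hfψ : ∀ᶠ x in 𝓝 p.1, f (x, ψ x) = f p) :
    HasStrictFDerivAt ψ (-(f' ∘L .inr 𝕜 E₁ E₂).inverse ∘L (f' ∘L .inl 𝕜 E₁ E₂)) p.1 := by
  have hgraph : Tendsto (fun x => (x, ψ x)) (𝓝 p.1) (𝓝 p) := by
    simpa [hψp] using (continuousAt_id.prodMk hψ).tendsto
  refine (hf.hasStrictFDerivAt_implicitFunctionOfProdDomain hf₂).congr_of_eventuallyEq ?_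
  filter_upwards [hfψ,
    hgraph.eventually (hf.eventually_apply_eq_iff_implicitFunctionOfProdDomain hf₂)]
    with x hx hiff using hiff.1 hx

theorem minimizer_derivative_formula_general
    {X M : Type*} [NormedAddCommGroup X] [NormedSpace ℝ X] [CompleteSpace X]
    [NormedAddCommGroup M] [NormedSpace ℝ M] [CompleteSpace M]
    (U : Set X) (O : Set M) (hU : IsOpen U) (hO : IsOpen O)
    (J : X → M → ℝ) (DXJ : X → M → (X →L[ℝ] ℝ))
    (DXXJ : X → M → (X →L[ℝ] X →L[ℝ] ℝ))
    (DMDXJ : X → M → (M →L[ℝ] X →L[ℝ] ℝ))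
    (hJd1 : ∀ μ ∈ O, ∀ w ∈ U, HasFDerivAt (fun v => J v μ) (DXJ w μ) w)
    (hJd2 : ∀ μ ∈ O, ∀ w ∈ U, HasFDerivAt (fun v => DXJ v μ) (DXXJ w μ) w)
    (hJdM : ∀ w ∈ U, ∀ μ ∈ O, HasFDerivAt (fun ν => DXJ w ν) (DMDXJ w μ) μ)
    -- `∂_X J ∈ C¹(U × O, X')`
    (hDX1 : ContDiffOn ℝ 1 (fun p : X × M => DXJ p.1 p.2) (U ×ˢ O))
    -- the minimizer map from the local-minimizer existence theorem
    (U₀ : Set X) (O₀ : Set M) (u : M → X)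
    (hO₀ : IsOpen O₀)
    (hU₀U : U₀ ⊆ U) (hO₀O : O₀ ⊆ O)
    (hu : ContinuousOn u O₀) (huU₀ : MapsTo u O₀ U₀)
    (hucrit : ∀ μ ∈ O₀, DXJ (u μ) μ = 0)
    -- `Λ μ` : the inverse of `∂_X² J (u μ, μ) : X → X'` given by Lax–Milgram
    (Λ : M → ((X →L[ℝ] ℝ) →L[ℝ] X))
    (hΛ : ∀ μ ∈ O₀, ∀ (h : X →L[ℝ] ℝ) (w : X), DXXJ (u μ) μ (Λ μ h) w = h w) :
    ∀ μ ∈ O₀, HasFDerivAt u (-((Λ μ).comp (DMDXJ (u μ) μ))) μ := by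
  intro μ hμ
  have huμ : u μ ∈ U := hU₀U (huU₀ hμ)
  have hμO : μ ∈ O := hO₀O hμ
  have hsymm : ∀ v w, DXXJ (u μ) μ v w = DXXJ (u μ) μ w v :=
    second_derivative_symmetric_of_eventually
      (eventually_of_mem (hU.mem_nhds huμ) (hJd1 μ hμO)) (hJd2 μ hμO _ huμ)
  have hright : DXXJ (u μ) μ ∘L Λ μ = .id ℝ _ := by
    ext h w
    exact hΛ μ hμ h w
  -- The parameter comes first, as in `HasStrictFDerivAt.implicitFunctionOfProdDomain`.
  obtain ⟨L, hL⟩ : ∃ L : M × X →L[ℝ] X →L[ℝ] ℝ,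
      HasStrictFDerivAt (fun p : M × X => DXJ p.2 p.1) L (μ, u μ) :=
    ⟨_, ((hDX1.contDiffAt ((hU.prod hO).mem_nhds ⟨huμ, hμO⟩)).comp (μ, u μ)
      (contDiffAt_snd.prodMk contDiffAt_fst)).hasStrictFDerivAt one_ne_zero⟩
  have hLinl : L ∘L .inl ℝ M X = DMDXJ (u μ) μ :=
    (hL.hasFDerivAt.comp μ (hasFDerivAt_prodMk_left (𝕜 := ℝ) μ (u μ)) :).unique
      (hJdM _ huμ μ hμO)
  have hLinr : L ∘L .inr ℝ M X = DXXJ (u μ) μ :=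
    (hL.hasFDerivAt.comp (u μ) (hasFDerivAt_prodMk_right (𝕜 := ℝ) μ (u μ)) :).unique
      (hJd2 μ hμO _ huμ)
  have hleft := ContinuousLinearMap.comp_eq_id_of_comp_eq_id_of_symm hsymm hright
  have hu' := hL.hasStrictFDerivAt_of_eventually_apply_eq
    (hLinr ▸ .of_inverse hright hleft) (hu.continuousAt (hO₀.mem_nhds hμ)) rfl
    (eventually_of_mem (hO₀.mem_nhds hμ) fun ν hν => (hucrit ν hν).trans (hucrit μ hμ).symm)
  rw [hLinl, hLinr, ContinuousLinearMap.inverse_eq hright hleft] at hu'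
  exact hu'.hasFDerivAt

/-- **Derivative of the minimizer map** (Proposition 2.8 of Kimura–Wakano).
Under the hypotheses of the local-minimizer existence theorem with
`∂_X J ∈ C¹(U × O, X')` (encoded through the partial derivatives `DXXJ` of
`∂_X J` in `X` and `DMDXJ = ∂_M ∂_X J` in `M`, jointly `C¹`), the Fréchet
derivative of the minimizer map is `u'(μ) = −Λ(μ) h₀(μ)` where
`h₀(μ) = ∂_M ∂_X J(u μ, μ) ∈ B(M,X')` and `Λ(μ) ∈ B(X',X)` is the inverse of
`∂_X² J(u μ, μ)` regarded as an isomorphism `X → X'` (i.e.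
`∂_X² J(u μ, μ)[Λ(μ)h, w] = h[w]` for all `w ∈ X`, `h ∈ X'`). -/
theorem minimizer_derivative_formula
    {X M : Type*} [NormedAddCommGroup X] [NormedSpace ℝ X] [CompleteSpace X]
    [NormedAddCommGroup M] [NormedSpace ℝ M] [CompleteSpace M]
    (U : Set X) (O : Set M) (hU : IsOpen U) (hO : IsOpen O)
    (J : X → M → ℝ) (DXJ : X → M → (X →L[ℝ] ℝ))
    (DXXJ : X → M → (X →L[ℝ] X →L[ℝ] ℝ))
    (DMDXJ : X → M → (M →L[ℝ] X →L[ℝ] ℝ))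
    (u₀ : X) (μ₀ : M) (hu₀U : u₀ ∈ U) (hμ₀O : μ₀ ∈ O)
    (hJd1 : ∀ μ ∈ O, ∀ w ∈ U, HasFDerivAt (fun v => J v μ) (DXJ w μ) w)
    (hJd2 : ∀ μ ∈ O, ∀ w ∈ U, HasFDerivAt (fun v => DXJ v μ) (DXXJ w μ) w)
    (hJdM : ∀ w ∈ U, ∀ μ ∈ O, HasFDerivAt (fun ν => DXJ w ν) (DMDXJ w μ) μ)
    -- `∂_X J ∈ C¹(U × O, X')`
    (hDX1 : ContDiffOn ℝ 1 (fun p : X × M => DXJ p.1 p.2) (U ×ˢ O))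
    (hcrit : DXJ u₀ μ₀ = 0)
    (α : ℝ) (hα : 0 < α)
    (hcoer : ∀ w : X, α * ‖w‖ ^ 2 ≤ DXXJ u₀ μ₀ w w)
    -- the minimizer map from the local-minimizer existence theorem
    (U₀ : Set X) (O₀ : Set M) (u : M → X)
    (hU₀ : IsOpen U₀) (hO₀ : IsOpen O₀) (hu₀U₀ : u₀ ∈ U₀) (hμ₀O₀ : μ₀ ∈ O₀)
    (hU₀U : U₀ ⊆ U) (hO₀O : O₀ ⊆ O)
    (hu : ContinuousOn u O₀) (huU₀ : MapsTo u O₀ U₀) (hu₀ : u μ₀ = u₀)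
    (hucrit : ∀ μ ∈ O₀, DXJ (u μ) μ = 0)
    (humin : ∀ μ ∈ O₀, ∀ w ∈ U₀, J (u μ) μ ≤ J w μ)
    -- `Λ μ` : the inverse of `∂_X² J (u μ, μ) : X → X'` given by Lax–Milgram
    (Λ : M → ((X →L[ℝ] ℝ) →L[ℝ] X))
    (hΛ : ∀ μ ∈ O₀, ∀ (h : X →L[ℝ] ℝ) (w : X), DXXJ (u μ) μ (Λ μ h) w = h w) :
    ∀ μ ∈ O₀, HasFDerivAt u (-((Λ μ).comp (DMDXJ (u μ) μ))) μ :=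
  minimizer_derivative_formula_general U O hU hO J DXJ DXXJ DMDXJ hJd1 hJd2 hJdM hDX1 U₀ O₀ u hO₀
    hU₀U hO₀O hu huU₀ hucrit Λ hΛ
end

section
/- Under the hypotheses of the local-minimizer existence theorem with J ∈ C²(U × O), the minimum-value function J_*(μ) = J(u(μ),μ) is C² on O₀ and its second Fréchet derivative satisfies J_*''(μ)[μ₁,μ₂] = ∂_M² J(u(μ),μ)[μ₁,μ₂] − ⟨Λ(μ) h₀(μ)[μ₁], h₀(μ)[μ₂]⟩ for all μ₁, μ₂ ∈ M, where h₀(μ) = ∂_M ∂_X J(u(μ),μ) and Λ(μ) is the inverse of ∂_X² J(u(μ),μ). -/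
/-!
Since `u` is continuous and `∂_X J (u ν, ν) = 0`, the implicit function theorem applied to
`∂_X J` shows that `u` is differentiable with `u'(μ) = -Λ(μ) h₀(μ)`; here `Λ(μ)`, a right
inverse of the symmetric form `∂_X² J (u μ, μ)`, is automatically a two-sided inverse. The
envelope theorem gives `J_*' = ∂_M J (u ·, ·)`. Differentiating this along the graph of `u`,
with the symmetry of mixed partials, yields `J_*'' = ∂_M² J + h₀ᵀ u'`. Continuity follows from
the continuity of the second partials of the `C²` function `J` and of operator inversion.
-/

open Set Filter Topology ContinuousLinearMap

theorem eventually_nhds_of_forall_mem_prod {α β : Type*} [TopologicalSpace α]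
    [TopologicalSpace β] {U : Set α} {O : Set β} (hU : IsOpen U) (hO : IsOpen O) {p : α × β}
    (hp : p ∈ U ×ˢ O) {P : α → β → Prop} (h : ∀ x ∈ U, ∀ y ∈ O, P x y) :
    ∀ᶠ q in 𝓝 p, P q.1 q.2 :=
  eventually_of_mem ((hU.prod hO).mem_nhds hp) fun q hq => h q.1 hq.1 q.2 hq.2

theorem ContinuousOn.uncurry_comp_graph {α β γ : Type*} [TopologicalSpace α]
    [TopologicalSpace β] [TopologicalSpace γ] {Φ : α → β → γ} {u : β → α} {s : Set β}
    {t : Set (α × β)} (hΦ : ContinuousOn ↿Φ t) (hu : ContinuousOn u s)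
    (hst : MapsTo (fun b => (u b, b)) s t) : ContinuousOn (fun b => Φ (u b) b) s :=
  hΦ.comp (hu.prodMk continuousOn_id) hst

section PartialDerivatives

variable {𝕜 E F G : Type*} [NontriviallyNormedField 𝕜]
  [NormedAddCommGroup E] [NormedSpace 𝕜 E] [NormedAddCommGroup F] [NormedSpace 𝕜 F]
  [NormedAddCommGroup G] [NormedSpace 𝕜 G]
  {f : E → F → G} {f₁ : E → F → E →L[𝕜] G} {f₂ : E → F → F →L[𝕜] G} {U : Set E} {O : Set F}

theorem HasFDerivAt.comp_inl_eq_of_partial {p : E × F} {f' : E × F →L[𝕜] G} {f₁ : E →L[𝕜] G}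
    (hf : HasFDerivAt ↿f f' p) (h₁ : HasFDerivAt (f · p.2) f₁ p.1) : f' ∘L inl 𝕜 E F = f₁ :=
  (hf.comp (f := (·, p.2)) p.1 (hasFDerivAt_prodMk_left p.1 p.2)).unique h₁

theorem HasFDerivAt.comp_inr_eq_of_partial {p : E × F} {f' : E × F →L[𝕜] G} {f₂ : F →L[𝕜] G}
    (hf : HasFDerivAt ↿f f' p) (h₂ : HasFDerivAt (f p.1 ·) f₂ p.2) : f' ∘L inr 𝕜 E F = f₂ :=
  (hf.comp (f := (p.1, ·)) p.2 (hasFDerivAt_prodMk_right p.1 p.2)).unique h₂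

theorem DifferentiableAt.hasFDerivAt_coprod_of_partial {p : E × F} {f₁ : E →L[𝕜] G}
    {f₂ : F →L[𝕜] G} (hf : DifferentiableAt 𝕜 ↿f p) (h₁ : HasFDerivAt (f · p.2) f₁ p.1)
    (h₂ : HasFDerivAt (f p.1 ·) f₂ p.2) : HasFDerivAt ↿f (f₁.coprod f₂) p := by
  rw [← hf.hasFDerivAt.comp_inl_eq_of_partial h₁, ← hf.hasFDerivAt.comp_inr_eq_of_partial h₂,
    coprod_comp_inl_inr]
  exact hf.hasFDerivAt

theorem DifferentiableOn.eqOn_partial_fst (hf : DifferentiableOn 𝕜 ↿f (U ×ˢ O))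
    (hU : IsOpen U) (hO : IsOpen O) (h₁ : ∀ y ∈ O, ∀ x ∈ U, HasFDerivAt (f · y) (f₁ x y) x) :
    EqOn ↿f₁ (fun q => fderiv 𝕜 ↿f q ∘L inl 𝕜 E F) (U ×ˢ O) := fun q hq =>
  (((hf q hq).differentiableAt ((hU.prod hO).mem_nhds hq)).hasFDerivAt.comp_inl_eq_of_partial
    (h₁ q.2 hq.2 q.1 hq.1)).symm

theorem DifferentiableOn.eqOn_partial_snd (hf : DifferentiableOn 𝕜 ↿f (U ×ˢ O))
    (hU : IsOpen U) (hO : IsOpen O) (h₂ : ∀ x ∈ U, ∀ y ∈ O, HasFDerivAt (f x ·) (f₂ x y) y) :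
    EqOn ↿f₂ (fun q => fderiv 𝕜 ↿f q ∘L inr 𝕜 E F) (U ×ˢ O) := fun q hq =>
  (((hf q hq).differentiableAt ((hU.prod hO).mem_nhds hq)).hasFDerivAt.comp_inr_eq_of_partial
    (h₂ q.1 hq.1 q.2 hq.2)).symm

theorem ContDiffOn.partial_fst {m n : WithTop ℕ∞} (hf : ContDiffOn 𝕜 n ↿f (U ×ˢ O))
    (hU : IsOpen U) (hO : IsOpen O) (h₁ : ∀ y ∈ O, ∀ x ∈ U, HasFDerivAt (f · y) (f₁ x y) x)
    (hmn : m + 1 ≤ n) : ContDiffOn 𝕜 m ↿f₁ (U ×ˢ O) :=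
  ((hf.fderiv_of_isOpen (hU.prod hO) hmn).clm_comp contDiffOn_const).congr
    ((hf.differentiableOn (by rintro rfl; simp at hmn)).eqOn_partial_fst hU hO h₁)

theorem ContDiffOn.partial_snd {m n : WithTop ℕ∞} (hf : ContDiffOn 𝕜 n ↿f (U ×ˢ O))
    (hU : IsOpen U) (hO : IsOpen O) (h₂ : ∀ x ∈ U, ∀ y ∈ O, HasFDerivAt (f x ·) (f₂ x y) y)
    (hmn : m + 1 ≤ n) : ContDiffOn 𝕜 m ↿f₂ (U ×ˢ O) :=
  ((hf.fderiv_of_isOpen (hU.prod hO) hmn).clm_comp contDiffOn_const).congr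
    ((hf.differentiableOn (by rintro rfl; simp at hmn)).eqOn_partial_snd hU hO h₂)

theorem ContDiffOn.mixed_partials_comm [IsRCLikeNormedField 𝕜]
    {f₂₁ : E → F → F →L[𝕜] E →L[𝕜] G}
    (hf : ContDiffOn 𝕜 2 ↿f (U ×ˢ O)) (hU : IsOpen U) (hO : IsOpen O)
    (h₁ : ∀ y ∈ O, ∀ x ∈ U, HasFDerivAt (f · y) (f₁ x y) x)
    (h₂ : ∀ x ∈ U, ∀ y ∈ O, HasFDerivAt (f x ·) (f₂ x y) y)
    (h₂₁ : ∀ x ∈ U, ∀ y ∈ O, HasFDerivAt (f₁ x ·) (f₂₁ x y) y) {x : E} {y : F} (hx : x ∈ U)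
    (hy : y ∈ O) : HasFDerivAt (f₂ · y) (f₂₁ x y).flip x := by
  -- `∂_y f₁` and `∂_x f₂` are `B (0, ·) (·, 0)` and `B (·, 0) (0, ·)` for the symmetric `B = D²f`.
  have hp : U ×ˢ O ∈ 𝓝 (x, y) := (hU.prod hO).mem_nhds ⟨hx, hy⟩
  have hdiff := hf.differentiableOn two_ne_zero
  have hB : HasFDerivAt (fderiv 𝕜 ↿f) (fderiv 𝕜 (fderiv 𝕜 ↿f) (x, y)) (x, y) :=
    ((hf.contDiffAt hp).fderiv_right (m := 1) (by norm_num)).differentiableAt one_ne_zero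
      |>.hasFDerivAt
  have hD₁ := (hB.clm_comp (hasFDerivAt_const (inl 𝕜 E F) _)).congr_of_eventuallyEq
    (eventuallyEq_of_mem hp (hdiff.eqOn_partial_fst hU hO h₁))
  have hD₂ := (hB.clm_comp (hasFDerivAt_const (inr 𝕜 E F) _)).congr_of_eventuallyEq
    (eventuallyEq_of_mem hp (hdiff.eqOn_partial_snd hU hO h₂))
  have h₂₁_eq := hD₁.comp_inr_eq_of_partial (h₂₁ x hx y hy)
  refine (hD₂.comp (f := (·, y)) x (hasFDerivAt_prodMk_left x y)).congr_fderiv ?_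
  ext v w
  simp [← h₂₁_eq, ((hf.contDiffAt hp).isSymmSndFDerivAt (by simp)).eq]

theorem ContDiffOn.hasFDerivAt_uncurry_partial_snd [IsRCLikeNormedField 𝕜]
    {f₂₁ : E → F → F →L[𝕜] E →L[𝕜] G} {f₂₂ : E → F → F →L[𝕜] F →L[𝕜] G}
    (hf : ContDiffOn 𝕜 2 ↿f (U ×ˢ O)) (hU : IsOpen U) (hO : IsOpen O)
    (h₁ : ∀ y ∈ O, ∀ x ∈ U, HasFDerivAt (f · y) (f₁ x y) x)
    (h₂ : ∀ x ∈ U, ∀ y ∈ O, HasFDerivAt (f x ·) (f₂ x y) y)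
    (h₂₁ : ∀ x ∈ U, ∀ y ∈ O, HasFDerivAt (f₁ x ·) (f₂₁ x y) y)
    (h₂₂ : ∀ x ∈ U, ∀ y ∈ O, HasFDerivAt (f₂ x ·) (f₂₂ x y) y) {x : E} {y : F} (hx : x ∈ U)
    (hy : y ∈ O) : HasFDerivAt ↿f₂ ((f₂₁ x y).flip.coprod (f₂₂ x y)) (x, y) :=
  (((hf.partial_snd hU hO h₂ (by norm_num)).differentiableOn one_ne_zero _ ⟨hx, hy⟩
    ).differentiableAt ((hU.prod hO).mem_nhds ⟨hx, hy⟩)).hasFDerivAt_coprod_of_partial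
    (hf.mixed_partials_comm hU hO h₁ h₂ h₂₁ hx hy) (h₂₂ x hx y hy)

end PartialDerivatives

section Graph

variable {𝕜 E F G : Type*} [NontriviallyNormedField 𝕜]
  [NormedAddCommGroup E] [NormedSpace 𝕜 E] [NormedAddCommGroup F] [NormedSpace 𝕜 F]
  [NormedAddCommGroup G] [NormedSpace 𝕜 G] {u : F → E} {μ : F}

theorem HasFDerivAt.uncurry_comp_graph {g : E → F → G} {a : E →L[𝕜] G} {b : F →L[𝕜] G}
    {u' : F →L[𝕜] E} (hg : HasFDerivAt ↿g (a.coprod b) (u μ, μ)) (hu : HasFDerivAt u u' μ) :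
    HasFDerivAt (fun ν => g (u ν) ν) (a ∘L u' + b) μ :=
  (hg.comp (f := fun ν => (u ν, ν)) μ (hu.prodMk (hasFDerivAt_id μ))).congr_fderiv (by ext; simp)

theorem hasFDerivAt_envelope_s6 {g : E → F → G} {b : F →L[𝕜] G}
    (hg : DifferentiableAt 𝕜 ↿g (u μ, μ)) (h₁ : HasFDerivAt (g · μ) (0 : E →L[𝕜] G) (u μ))
    (h₂ : HasFDerivAt (g (u μ) ·) b μ) (hu : DifferentiableAt 𝕜 u μ) :
    HasFDerivAt (fun ν => g (u ν) ν) b μ :=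
  ((hg.hasFDerivAt_coprod_of_partial h₁ h₂).uncurry_comp_graph hu.hasFDerivAt).congr_fderiv
    (by simp)

theorem hasFDerivAt_implicit [IsRCLikeNormedField 𝕜]
    [CompleteSpace E] [CompleteSpace F] [CompleteSpace G] {U : Set E} {O : Set F}
    {g : E → F → G} {g₁ : E → F → E →L[𝕜] G} {g₂ : E → F → F →L[𝕜] G}
    (hU : IsOpen U) (hO : IsOpen O)
    (hg₁ : ∀ y ∈ O, ∀ x ∈ U, HasFDerivAt (g · y) (g₁ x y) x)
    (hg₂ : ∀ x ∈ U, ∀ y ∈ O, HasFDerivAt (g x ·) (g₂ x y) y)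
    (hc₁ : ContinuousOn ↿g₁ (U ×ˢ O)) (hc₂ : ContinuousOn ↿g₂ (U ×ˢ O)) (hμ : (u μ, μ) ∈ U ×ˢ O)
    (T : E ≃L[𝕜] G) (hT : g₁ (u μ) μ = T)
    (hu : ContinuousAt u μ) (hlevel : ∀ᶠ ν in 𝓝 μ, g (u ν) ν = g (u μ) μ) :
    HasFDerivAt u (-(T.symm : G →L[𝕜] E) ∘L g₂ (u μ) μ) μ := by
  -- Mathlib's implicit function solves for the second variable: use `(ν, x) ↦ g x ν`.
  have hμ' : (μ, u μ) ∈ O ×ˢ U := ⟨hμ.2, hμ.1⟩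
  have hdν : ∀ᶠ v in 𝓝 (μ, u μ), HasFDerivAt (g v.2 ·) (g₂ v.2 v.1) v.1 :=
    eventually_nhds_of_forall_mem_prod hO hU hμ' fun y hy x hx => hg₂ x hx y hy
  have hdx : ∀ᶠ v in 𝓝 (μ, u μ), HasFDerivAt (g · v.1) (g₁ v.2 v.1) v.2 :=
    eventually_nhds_of_forall_mem_prod hO hU hμ' hg₁
  have hswap : ContinuousAt Prod.swap (μ, u μ) := continuous_swap.continuousAt
  have hcν : ContinuousAt (↿fun ν x => g₂ x ν) (μ, u μ) :=
    ContinuousAt.comp (f := Prod.swap) (x := (μ, u μ))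
      (hc₂.continuousAt ((hU.prod hO).mem_nhds hμ)) hswap
  have hcx : ContinuousAt (↿fun ν x => g₁ x ν) (μ, u μ) :=
    ContinuousAt.comp (f := Prod.swap) (x := (μ, u μ))
      (hc₁.continuousAt ((hU.prod hO).mem_nhds hμ)) hswap
  have hT' : (g₁ (u μ) μ).IsInvertible := ⟨T, hT.symm⟩
  have hψ := hasStrictFDerivAt_implicitFunctionOfBivariate (f := fun ν x => g x ν)
    hdν hdx hcν hcx hT'
  have hψu :
      implicitFunctionOfBivariate (f := fun ν x => g x ν) hdν hdx hcν hcx hT' =ᶠ[𝓝 μ] u := by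
    filter_upwards [(continuousAt_id.prodMk hu).eventually
      (eventually_apply_eq_iff_implicitFunctionOfBivariate (f := fun ν x => g x ν)
        hdν hdx hcν hcx hT'), hlevel] with ν hν hlevelν
    exact hν.1 hlevelν
  simp only [hT, inverse_equiv] at hψ
  exact hψ.hasFDerivAt.congr_of_eventuallyEq hψu.symm

end Graph

section Inverse

variable {𝕜 E F : Type*} [NontriviallyNormedField 𝕜]
  [NormedAddCommGroup E] [NormedSpace 𝕜 E] [NormedAddCommGroup F] [NormedSpace 𝕜 F]

theorem ContinuousLinearMap.leftInverse_of_rightInverse_of_symm [SeparatingDual 𝕜 E]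
    {T : E →L[𝕜] E →L[𝕜] 𝕜} {Λ : (E →L[𝕜] 𝕜) →L[𝕜] E} (hT : ∀ x y, T x y = T y x)
    (hΛ : Function.RightInverse Λ T) : Function.LeftInverse Λ T := by
  intro x
  refine (SeparatingDual.eq_iff_forall_dual_eq (R := 𝕜)).2 fun h => ?_
  calc h (Λ (T x)) = T (Λ h) (Λ (T x)) := by rw [hΛ h]
    _ = T x (Λ h) := by rw [hT, hΛ (T x)]
    _ = h x := by rw [hT, hΛ h]

theorem ContinuousOn.clm_inverse [CompleteSpace E] {α : Type*} [TopologicalSpace α] {s : Set α}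
    {T : α → E →L[𝕜] F} {Λ : α → F →L[𝕜] E} (hT : ContinuousOn T s)
    (hl : ∀ a ∈ s, Function.LeftInverse (Λ a) (T a))
    (hr : ∀ a ∈ s, Function.RightInverse (Λ a) (T a)) : ContinuousOn Λ s := by
  let e a (ha : a ∈ s) : E ≃L[𝕜] F := .equivOfInverse (T a) (Λ a) (hl a ha) (hr a ha)
  refine ContinuousOn.congr (f := fun a => (T a).inverse) (fun a ha => ?_)
    fun a ha => (inverse_equiv (e a ha)).symm
  exact ((IsInvertible.contDiffAt_map_inverse (n := 0) ⟨e a ha, rfl⟩).continuousAt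
    ).comp_continuousWithinAt (f := T) (hT a ha)

end Inverse

theorem minimum_value_second_derivative_general
    {X M : Type*} [NormedAddCommGroup X] [NormedSpace ℝ X] [CompleteSpace X]
    [NormedAddCommGroup M] [NormedSpace ℝ M] [CompleteSpace M]
    (U : Set X) (O : Set M) (hU : IsOpen U) (hO : IsOpen O)
    (J : X → M → ℝ) (DXJ : X → M → (X →L[ℝ] ℝ)) (DMJ : X → M → (M →L[ℝ] ℝ))
    (DXXJ : X → M → (X →L[ℝ] X →L[ℝ] ℝ))
    (DMDXJ : X → M → (M →L[ℝ] X →L[ℝ] ℝ))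
    (DMMJ : X → M → (M →L[ℝ] M →L[ℝ] ℝ))
    (hJd1 : ∀ μ ∈ O, ∀ w ∈ U, HasFDerivAt (fun v => J v μ) (DXJ w μ) w)
    (hJdM : ∀ w ∈ U, ∀ μ ∈ O, HasFDerivAt (fun ν => J w ν) (DMJ w μ) μ)
    (hJd2 : ∀ μ ∈ O, ∀ w ∈ U, HasFDerivAt (fun v => DXJ v μ) (DXXJ w μ) w)
    (hJdMX : ∀ w ∈ U, ∀ μ ∈ O, HasFDerivAt (fun ν => DXJ w ν) (DMDXJ w μ) μ)
    (hJdMM : ∀ w ∈ U, ∀ μ ∈ O, HasFDerivAt (fun ν => DMJ w ν) (DMMJ w μ) μ)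
    -- `J ∈ C²(U × O)`
    (hJC2 : ContDiffOn ℝ 2 (fun p : X × M => J p.1 p.2) (U ×ˢ O))
    -- the minimizer map from the local-minimizer existence theorem
    (U₀ : Set X) (O₀ : Set M) (u : M → X)
    (hO₀ : IsOpen O₀)
    (hU₀U : U₀ ⊆ U) (hO₀O : O₀ ⊆ O)
    (hu : ContinuousOn u O₀) (huU₀ : MapsTo u O₀ U₀)
    (hucrit : ∀ μ ∈ O₀, DXJ (u μ) μ = 0)
    -- `Λ μ` : the inverse of `∂_X² J (u μ, μ) : X → X'` given by Lax–Milgram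
    (Λ : M → ((X →L[ℝ] ℝ) →L[ℝ] X))
    (hΛ : ∀ μ ∈ O₀, ∀ (h : X →L[ℝ] ℝ) (w : X), DXXJ (u μ) μ (Λ μ h) w = h w) :
    ∃ J2 : M → (M →L[ℝ] M →L[ℝ] ℝ),
      ContinuousOn J2 O₀ ∧
      ∀ μ ∈ O₀,
        HasFDerivAt (fun ν => J (u ν) ν) (DMJ (u μ) μ) μ ∧
        HasFDerivAt (fun ν => DMJ (u ν) ν) (J2 μ) μ ∧
        ∀ μ₁ μ₂ : M,
          J2 μ μ₁ μ₂ =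
            DMMJ (u μ) μ μ₁ μ₂ - DMDXJ (u μ) μ μ₂ (Λ μ (DMDXJ (u μ) μ μ₁)) := by
  have hgraph : MapsTo (fun μ => (u μ, μ)) O₀ (U ×ˢ O) := fun μ hμ =>
    ⟨hU₀U (huU₀ hμ), hO₀O hμ⟩
  have hDXJ : ContDiffOn ℝ 1 ↿DXJ (U ×ˢ O) := hJC2.partial_fst hU hO hJd1 (by norm_num)
  have hcXX := (hDXJ.partial_fst hU hO hJd2 (zero_add _).le).continuousOn
  have hcMX := (hDXJ.partial_snd hU hO hJdMX (zero_add _).le).continuousOn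
  have hΛr : ∀ μ ∈ O₀, Function.RightInverse (Λ μ) (DXXJ (u μ) μ) := fun μ hμ h =>
    ContinuousLinearMap.ext (hΛ μ hμ h)
  have hΛl : ∀ μ ∈ O₀, Function.LeftInverse (Λ μ) (DXXJ (u μ) μ) := fun μ hμ =>
    leftInverse_of_rightInverse_of_symm (second_derivative_symmetric_of_eventually
      (eventually_of_mem (hU.mem_nhds (hgraph hμ).1) (hJd1 μ (hgraph hμ).2))
      (hJd2 μ (hgraph hμ).2 (u μ) (hgraph hμ).1)) (hΛr μ hμ)
  have hu' {μ} (hμ : μ ∈ O₀) : HasFDerivAt u (-(Λ μ ∘L DMDXJ (u μ) μ)) μ :=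
    hasFDerivAt_implicit hU hO hJd2 hJdMX hcXX hcMX (hgraph hμ)
      (.equivOfInverse _ _ (hΛl μ hμ) (hΛr μ hμ)) rfl (hu.continuousAt (hO₀.mem_nhds hμ))
      (eventually_of_mem (hO₀.mem_nhds hμ) fun ν hν => by rw [hucrit ν hν, hucrit μ hμ])
  refine ⟨fun μ => DMMJ (u μ) μ - (DMDXJ (u μ) μ).flip ∘L (Λ μ ∘L DMDXJ (u μ) μ), ?_,
    fun μ hμ => ⟨?_, ?_, fun μ₁ μ₂ => by simp⟩⟩
  · have hcMM := ((hJC2.partial_snd hU hO hJdM (by norm_num)).partial_snd hU hO hJdMM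
      (zero_add _).le).continuousOn.uncurry_comp_graph hu hgraph
    have hcMX' := hcMX.uncurry_comp_graph hu hgraph
    -- instance search misses this on iterated spaces of continuous linear maps
    have : ContinuousSub (M →L[ℝ] M →L[ℝ] ℝ) :=
      @IsTopologicalAddGroup.to_continuousSub (M →L[ℝ] M →L[ℝ] ℝ) _ _ inferInstance
    exact hcMM.sub (((flipₗᵢ ℝ M X ℝ).continuous.comp_continuousOn hcMX').clm_comp
      (((hcXX.uncurry_comp_graph hu hgraph).clm_inverse hΛl hΛr).clm_comp hcMX'))
  · exact hasFDerivAt_envelope_s6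
      ((hJC2.contDiffAt ((hU.prod hO).mem_nhds (hgraph hμ))).differentiableAt two_ne_zero)
      (hucrit μ hμ ▸ hJd1 μ (hgraph hμ).2 (u μ) (hgraph hμ).1)
      (hJdM (u μ) (hgraph hμ).1 μ (hgraph hμ).2) (hu' hμ).differentiableAt
  · refine ((hJC2.hasFDerivAt_uncurry_partial_snd hU hO hJd1 hJdM hJdMX hJdMM (hgraph hμ).1
      (hgraph hμ).2).uncurry_comp_graph (hu' hμ)).congr_fderiv ?_
    ext μ₁ μ₂
    simp [sub_eq_neg_add]

/-- **Second derivative of the minimum value** (Proposition 2.9 of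
Kimura–Wakano).  Under the hypotheses of the local-minimizer existence theorem
with `J ∈ C²(U × O)` (partial derivatives `DXJ = ∂_X J`, `DMJ = ∂_M J`,
`DXXJ = ∂_X² J`, `DMDXJ = ∂_M ∂_X J`, `DMMJ = ∂_M² J`), the minimum-value
function `J_*(μ) = J (u μ) μ` is `C²` on `O₀`: its first derivative is
`J_*'(μ) = ∂_M J(u μ, μ)`, and its second derivative satisfies
`J_*''(μ)[μ₁,μ₂] = ∂_M² J(u μ, μ)[μ₁,μ₂] − ⟨Λ(μ) h₀(μ)[μ₁], h₀(μ)[μ₂]⟩`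
where `h₀(μ) = ∂_M ∂_X J(u μ, μ)` and `Λ(μ)` is the inverse of
`∂_X² J(u μ, μ)`; the duality pairing `⟨x, h⟩` for `x ∈ X`, `h ∈ X'` is `h x`. -/
theorem minimum_value_second_derivative
    {X M : Type*} [NormedAddCommGroup X] [NormedSpace ℝ X] [CompleteSpace X]
    [NormedAddCommGroup M] [NormedSpace ℝ M] [CompleteSpace M]
    (U : Set X) (O : Set M) (hU : IsOpen U) (hO : IsOpen O)
    (J : X → M → ℝ) (DXJ : X → M → (X →L[ℝ] ℝ)) (DMJ : X → M → (M →L[ℝ] ℝ))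
    (DXXJ : X → M → (X →L[ℝ] X →L[ℝ] ℝ))
    (DMDXJ : X → M → (M →L[ℝ] X →L[ℝ] ℝ))
    (DMMJ : X → M → (M →L[ℝ] M →L[ℝ] ℝ))
    (u₀ : X) (μ₀ : M) (hu₀U : u₀ ∈ U) (hμ₀O : μ₀ ∈ O)
    (hJd1 : ∀ μ ∈ O, ∀ w ∈ U, HasFDerivAt (fun v => J v μ) (DXJ w μ) w)
    (hJdM : ∀ w ∈ U, ∀ μ ∈ O, HasFDerivAt (fun ν => J w ν) (DMJ w μ) μ)
    (hJd2 : ∀ μ ∈ O, ∀ w ∈ U, HasFDerivAt (fun v => DXJ v μ) (DXXJ w μ) w)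
    (hJdMX : ∀ w ∈ U, ∀ μ ∈ O, HasFDerivAt (fun ν => DXJ w ν) (DMDXJ w μ) μ)
    (hJdMM : ∀ w ∈ U, ∀ μ ∈ O, HasFDerivAt (fun ν => DMJ w ν) (DMMJ w μ) μ)
    -- `J ∈ C²(U × O)`
    (hJC2 : ContDiffOn ℝ 2 (fun p : X × M => J p.1 p.2) (U ×ˢ O))
    (hcrit : DXJ u₀ μ₀ = 0)
    (α : ℝ) (hα : 0 < α)
    (hcoer : ∀ w : X, α * ‖w‖ ^ 2 ≤ DXXJ u₀ μ₀ w w)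
    -- the minimizer map from the local-minimizer existence theorem
    (U₀ : Set X) (O₀ : Set M) (u : M → X)
    (hU₀ : IsOpen U₀) (hO₀ : IsOpen O₀) (hu₀U₀ : u₀ ∈ U₀) (hμ₀O₀ : μ₀ ∈ O₀)
    (hU₀U : U₀ ⊆ U) (hO₀O : O₀ ⊆ O)
    (hu : ContinuousOn u O₀) (huU₀ : MapsTo u O₀ U₀) (hu₀ : u μ₀ = u₀)
    (hucrit : ∀ μ ∈ O₀, DXJ (u μ) μ = 0)
    (humin : ∀ μ ∈ O₀, ∀ w ∈ U₀, J (u μ) μ ≤ J w μ)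
    -- `Λ μ` : the inverse of `∂_X² J (u μ, μ) : X → X'` given by Lax–Milgram
    (Λ : M → ((X →L[ℝ] ℝ) →L[ℝ] X))
    (hΛ : ∀ μ ∈ O₀, ∀ (h : X →L[ℝ] ℝ) (w : X), DXXJ (u μ) μ (Λ μ h) w = h w) :
    ∃ J2 : M → (M →L[ℝ] M →L[ℝ] ℝ),
      ContinuousOn J2 O₀ ∧
      ∀ μ ∈ O₀,
        HasFDerivAt (fun ν => J (u ν) ν) (DMJ (u μ) μ) μ ∧
        HasFDerivAt (fun ν => DMJ (u ν) ν) (J2 μ) μ ∧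
        ∀ μ₁ μ₂ : M,
          J2 μ μ₁ μ₂ =
            DMMJ (u μ) μ μ₁ μ₂ - DMDXJ (u μ) μ μ₂ (Λ μ (DMDXJ (u μ) μ μ₁)) :=
  minimum_value_second_derivative_general U O hU hO J DXJ DMJ DXXJ DMDXJ DMMJ hJd1 hJdM hJd2 hJdMX
    hJdMM hJC2 U₀ O₀ u hO₀ hU₀U hO₀O hu huU₀ hucrit Λ hΛ
end

section
/- Let Ω₀ ⊂ ℝⁿ be a bounded convex domain and φ ∈ W^{1,∞}(Ω₀, ℝⁿ) with θ := |φ − id|_{Lip,Ω₀} < 1. Then the Jacobian determinant satisfies ess-inf over Ω₀ of det(∇φᵀ) ≥ (1 − θ)ⁿ > 0. -/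
/-!
By Rademacher's theorem `φ - id` is differentiable a.e. with `‖∇(φ - id)‖ ≤ θ`, so it suffices
that `det (1 + A) ≥ (1 - θ)ⁿ` whenever `‖A‖ ≤ θ < 1`. Since `‖(1 + A) v‖ ≥ (1 - θ) ‖v‖`, the image
of the unit ball under `1 + A` contains the ball of radius `1 - θ`, and comparing Haar measures
gives `|det (1 + A)| ≥ (1 - θ)ⁿ`. The sign is positive because `det (1 + t A)` does not vanish
for `t ∈ [0, 1]` and equals `1` at `t = 0`.
-/

open Set Filter Topology MeasureTheory Metric Module

namespace ContinuousLinearMap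

variable {E : Type*} [NormedAddCommGroup E] [NormedSpace ℝ E] [FiniteDimensional ℝ E]

theorem det_one_add_ne_zero {A : E →L[ℝ] E} (hA : ‖A‖ < 1) : (1 + A).det ≠ 0 := by
  have hunit : IsUnit (1 + A) := by
    simpa using isUnit_one_sub_of_norm_lt_one (x := -A) (by rwa [norm_neg])
  exact (LinearMap.isUnit_det _ (hunit.map toLinearMapRingHom)).ne_zero

theorem det_one_add_pos {A : E →L[ℝ] E} (hA : ‖A‖ < 1) : 0 < (1 + A).det := by
  set f : ℝ → ℝ := fun t => (1 + t • A).det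
  have hf : Continuous f := continuous_det.comp (by fun_prop)
  have hf_ne : ∀ t ∈ Icc (0 : ℝ) 1, f t ≠ 0 := fun t ht => by
    refine det_one_add_ne_zero ((norm_smul_le t A).trans_lt ?_)
    rw [Real.norm_of_nonneg ht.1]
    nlinarith [norm_nonneg A, ht.2]
  by_contra! h
  obtain ⟨t, ht, hft⟩ := intermediate_value_Icc' zero_le_one hf.continuousOn
    ⟨by simpa [f] using h, by simp [f, det, one_def]⟩
  exact hf_ne t ht hft

theorem pow_finrank_le_abs_det {B : E →L[ℝ] E} {c : ℝ} (hc : 0 < c)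
    (hB : ∀ v, c * ‖v‖ ≤ ‖B v‖) : c ^ finrank ℝ E ≤ |B.det| := by
  borelize E
  let μ : Measure E := Measure.addHaar
  have hsurj : Function.Surjective B := by
    refine (LinearMap.injective_iff_surjective (f := (B : E →ₗ[ℝ] E))).mp fun v w h => ?_
    have := hB (v - w)
    rw [map_sub, show B v = B w from h, sub_self, norm_zero] at this
    exact sub_eq_zero.mp (norm_le_zero_iff.mp (nonpos_of_mul_nonpos_right this hc))
  have hball : ball 0 c ⊆ B '' ball 0 1 := by
    intro y hy
    obtain ⟨v, rfl⟩ := hsurj y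
    refine ⟨v, ?_, rfl⟩
    rw [mem_ball_zero_iff] at hy ⊢
    nlinarith [hB v]
  have hvol := measure_mono (μ := μ) hball
  rw [Measure.addHaar_ball_of_pos μ _ hc, Measure.addHaar_image_continuousLinearMap,
    ENNReal.mul_le_mul_iff_left (measure_ball_pos μ _ one_pos).ne' measure_ball_lt_top.ne,
    ENNReal.ofReal_le_ofReal_iff (abs_nonneg _)] at hvol
  exact hvol

theorem pow_finrank_le_det_one_add {A : E →L[ℝ] E} {θ : ℝ} (hθ : θ < 1) (hA : ‖A‖ ≤ θ) :
    (1 - θ) ^ finrank ℝ E ≤ (1 + A).det := by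
  rw [← abs_of_pos (det_one_add_pos (hA.trans_lt hθ))]
  refine pow_finrank_le_abs_det (sub_pos.2 hθ) fun v => ?_
  calc (1 - θ) * ‖v‖ ≤ ‖v‖ - ‖A v‖ := by nlinarith [A.le_opNorm v, norm_nonneg v]
    _ ≤ ‖(1 + A) v‖ := by simpa using norm_sub_norm_le v (-A v)

end ContinuousLinearMap

theorem LipschitzOnWith.ae_one_sub_pow_le_det_fderiv {E : Type*} [NormedAddCommGroup E]
    [NormedSpace ℝ E] [FiniteDimensional ℝ E] [MeasurableSpace E] [BorelSpace E]
    {μ : Measure E} [μ.IsAddHaarMeasure] {φ : E → E} {s : Set E} {θ : NNReal}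
    (hlip : LipschitzOnWith θ (fun x => φ x - x) s) (hs : IsOpen s) (hθ : θ < 1) :
    ∀ᵐ x ∂μ.restrict s, (1 - (θ : ℝ)) ^ finrank ℝ E ≤ (fderiv ℝ φ x).det := by
  rw [ae_restrict_iff' hs.measurableSet]
  filter_upwards [hlip.ae_differentiableWithinAt_of_mem (μ := μ)] with x hx hxs
  have hnhds : s ∈ 𝓝 x := hs.mem_nhds hxs
  have hφ : fderiv ℝ φ x = 1 + fderiv ℝ (fun y => φ y - y) x := by
    have := ((hx hxs).differentiableAt hnhds).hasFDerivAt.add (hasFDerivAt_id x)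
    rw [show ((fun y => φ y - y) + id) = φ from funext fun y => sub_add_cancel _ _] at this
    rw [this.fderiv, add_comm, ContinuousLinearMap.one_def]
  rw [hφ]
  exact ContinuousLinearMap.pow_finrank_le_det_one_add (NNReal.coe_lt_one.2 hθ)
    (norm_fderiv_le_of_lipschitzOn ℝ hnhds hlip)

theorem jacobian_essinf_bound_general (n : ℕ)
    (Ω₀ : Set (EuclideanSpace ℝ (Fin n)))
    (hΩ₀open : IsOpen Ω₀)
    (φ : EuclideanSpace ℝ (Fin n) → EuclideanSpace ℝ (Fin n))
    (θ : NNReal) (hθ : θ < 1)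
    (hlip : LipschitzOnWith θ (fun x => φ x - x) Ω₀) :
    (∀ᵐ x ∂(volume.restrict Ω₀),
      (1 - (θ : ℝ)) ^ n ≤
        LinearMap.det
          (fderiv ℝ φ x :
            EuclideanSpace ℝ (Fin n) →ₗ[ℝ] EuclideanSpace ℝ (Fin n))) ∧
    0 < (1 - (θ : ℝ)) ^ n := by
  refine ⟨?_, pow_pos (sub_pos.2 (NNReal.coe_lt_one.2 hθ)) n⟩
  simpa only [finrank_euclideanSpace_fin] using hlip.ae_one_sub_pow_le_det_fderiv hΩ₀open hθ

/-- **Jacobian bound for Lipschitz deformations** (inequality (3.1) of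
Kimura–Wakano).  Let `Ω₀ ⊆ ℝⁿ` be a bounded convex domain and
`φ ∈ W^{1,∞}(Ω₀,ℝⁿ)` with `θ := |φ − id|_{Lip,Ω₀} < 1`.  Then the Jacobian
determinant `det ∇φᵀ` (which by Rademacher's theorem is defined a.e. via the
Fréchet derivative of `φ`) satisfies
`ess-inf_{Ω₀} det ∇φᵀ ≥ (1 − θ)ⁿ > 0`, i.e. `det (fderiv ℝ φ x) ≥ (1 − θ)ⁿ`
for a.e. `x ∈ Ω₀`, and `(1 − θ)ⁿ > 0`. -/
theorem jacobian_essinf_bound (n : ℕ)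
    (Ω₀ : Set (EuclideanSpace ℝ (Fin n)))
    (hΩ₀open : IsOpen Ω₀) (hΩ₀bdd : Bornology.IsBounded Ω₀)
    (hΩ₀conv : Convex ℝ Ω₀) (hΩ₀ne : Ω₀.Nonempty)
    (φ : EuclideanSpace ℝ (Fin n) → EuclideanSpace ℝ (Fin n))
    (θ : NNReal) (hθ : θ < 1)
    (hlip : LipschitzOnWith θ (fun x => φ x - x) Ω₀) :
    (∀ᵐ x ∂(volume.restrict Ω₀),
      (1 - (θ : ℝ)) ^ n ≤
        LinearMap.det
          (fderiv ℝ φ x :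
            EuclideanSpace ℝ (Fin n) →ₗ[ℝ] EuclideanSpace ℝ (Fin n))) ∧
    0 < (1 - (θ : ℝ)) ^ n :=
  jacobian_essinf_bound_general n Ω₀ hΩ₀open φ θ hθ hlip
end
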